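/- arXiv:2404.11301 — 5 statements merged into one kernel-verified Lean document; each statement's English description precedes it below -/
import Mathlib

section
/- Let H be an infinite-dimensional real Hilbert space, V a real Hilbert space, ι : V → H an injective compact continuous linear map with dense range, and b : V × V → ℝ a continuous symmetric bilinear form satisfying b(u,u) ≥ 0 for all u ∈ V and ‖u‖_V² = ‖ι u‖_H² + b(u,u) for all u ∈ V. Then there exist a sequence (u_n)_{n≥1} in V and a nondecreasing sequence (λ_n)_{n≥1} of nonnegative real numbers with λ_n → ∞ such that (ι u_n)_{n≥1} is an orthonormal basis of H and b(u_n, v) = λ_n ⟨ι u_n, ι v⟩_H for every n ≥ 1 and every v ∈ V. -/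
open RealInnerProductSpace Filter Metric Set Topology

set_option linter.unusedSectionVars false
namespace WeakEig

variable {H : Type*} [NormedAddCommGroup H] [InnerProductSpace ℝ H] [CompleteSpace H]

noncomputable def rsup (T : H →L[ℝ] H) (W : Submodule ℝ H) : ℝ :=
  sSup ((fun x => ⟪T x, x⟫) '' {x : H | x ∈ W ∧ ‖x‖ = 1})

lemma rset_bdd (T : H →L[ℝ] H) (W : Submodule ℝ H) :
    BddAbove ((fun x => ⟪T x, x⟫) '' {x : H | x ∈ W ∧ ‖x‖ = 1}) := by
  refine ⟨‖T‖, ?_⟩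
  rintro r ⟨x, ⟨-, hx1⟩, rfl⟩
  calc ⟪T x, x⟫ ≤ ‖T x‖ * ‖x‖ := real_inner_le_norm _ _
    _ ≤ (‖T‖ * ‖x‖) * ‖x‖ := by gcongr; exact T.le_opNorm x
    _ = ‖T‖ := by rw [hx1]; ring

lemma rset_nonempty (T : H →L[ℝ] H) {W : Submodule ℝ H} (hW : W ≠ ⊥) :
    ((fun x => ⟪T x, x⟫) '' {x : H | x ∈ W ∧ ‖x‖ = 1}).Nonempty := by
  obtain ⟨y, hyW, hy0⟩ := Submodule.exists_mem_ne_zero_of_ne_bot hW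
  refine ⟨_, ⟨‖y‖⁻¹ • y, ⟨W.smul_mem _ hyW, ?_⟩, rfl⟩⟩
  rw [norm_smul, norm_inv, norm_norm, inv_mul_cancel₀ (norm_ne_zero_iff.2 hy0)]

lemma le_rsup (T : H →L[ℝ] H) {W : Submodule ℝ H} {x : H} (hx : x ∈ W) (hx1 : ‖x‖ = 1) :
    ⟪T x, x⟫ ≤ rsup T W :=
  le_csSup (rset_bdd T W) ⟨x, ⟨hx, hx1⟩, rfl⟩

lemma rayleigh_le (T : H →L[ℝ] H) {W : Submodule ℝ H} {x : H} (hx : x ∈ W) :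
    ⟪T x, x⟫ ≤ rsup T W * ‖x‖ ^ 2 := by
  rcases eq_or_ne x 0 with rfl | hx0
  · simp
  · have h1 : ‖(‖x‖⁻¹ • x)‖ = 1 := by
      rw [norm_smul, norm_inv, norm_norm, inv_mul_cancel₀ (norm_ne_zero_iff.2 hx0)]
    have := le_rsup T (W.smul_mem ‖x‖⁻¹ hx) h1
    rw [map_smul, inner_smul_left, inner_smul_right] at this
    have hxn : (0:ℝ) < ‖x‖ := norm_pos_iff.2 hx0
    rw [RCLike.conj_to_real] at this
    have h3 := mul_le_mul_of_nonneg_left this (le_of_lt (mul_pos hxn hxn))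
    calc ⟪T x, x⟫ = (‖x‖ * ‖x‖) * (‖x‖⁻¹ * (‖x‖⁻¹ * ⟪T x, x⟫)) := by
          field_simp
      _ ≤ (‖x‖ * ‖x‖) * rsup T W := h3
      _ = rsup T W * ‖x‖ ^ 2 := by ring

lemma rsup_pos (T : H →L[ℝ] H) (hpos : ∀ x : H, x ≠ 0 → 0 < ⟪T x, x⟫)
    {W : Submodule ℝ H} (hW : W ≠ ⊥) : 0 < rsup T W := by
  obtain ⟨y, hyW, hy0⟩ := Submodule.exists_mem_ne_zero_of_ne_bot hW
  have h1 : ‖(‖y‖⁻¹ • y)‖ = 1 := by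
    rw [norm_smul, norm_inv, norm_norm, inv_mul_cancel₀ (norm_ne_zero_iff.2 hy0)]
  have h2 : (‖y‖⁻¹ • y) ≠ 0 := by
    simp [smul_eq_zero, hy0, norm_eq_zero, inv_eq_zero]
  exact lt_of_lt_of_le (hpos _ h2) (le_rsup T (W.smul_mem _ hyW) h1)

lemma cauchy_schwarz_T (T : H →L[ℝ] H) (hsymm : ∀ x y : H, ⟪T x, y⟫ = ⟪x, T y⟫)
    (hpos : ∀ x : H, 0 ≤ ⟪T x, x⟫) (x y : H) :
    ⟪T x, y⟫ ^ 2 ≤ ⟪T x, x⟫ * ⟪T y, y⟫ := by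
  have hq : ∀ t : ℝ, 0 ≤ ⟪T y, y⟫ * (t * t) + (2 * ⟪T x, y⟫) * t + ⟪T x, x⟫ := by
    intro t
    have h0 := hpos (x + t • y)
    have hyx : ⟪T y, x⟫ = ⟪T x, y⟫ := by
      rw [hsymm y x, real_inner_comm]
    simp only [map_add, map_smul, inner_add_left, inner_add_right,
      inner_smul_left, inner_smul_right, RCLike.conj_to_real, hyx] at h0
    nlinarith [h0]
  have := discrim_le_zero hq
  rw [discrim] at this
  nlinarith [this]


lemma norm_T_sq_le (T : H →L[ℝ] H) (hsymm : ∀ x y : H, ⟪T x, y⟫ = ⟪x, T y⟫)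
    (hpos : ∀ x : H, 0 ≤ ⟪T x, x⟫) {W : Submodule ℝ H} {x : H} (hx : x ∈ W)
    (hWinv : ∀ y ∈ W, T y ∈ W) :
    ‖T x‖ ^ 2 ≤ rsup T W * ⟪T x, x⟫ := by
  rcases eq_or_ne (T x) 0 with h0 | h0
  · simp [h0]
  · have hcs := cauchy_schwarz_T T hsymm hpos x (T x)
    have h1 : ⟪T x, T x⟫ = ‖T x‖ ^ 2 := real_inner_self_eq_norm_sq (T x)
    have h2 : ⟪T (T x), T x⟫ ≤ rsup T W * ‖T x‖ ^ 2 := rayleigh_le T (hWinv x hx)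
    have hTx : (0:ℝ) < ‖T x‖ ^ 2 := pow_pos (norm_pos_iff.2 h0) 2
    nlinarith [hcs, hpos x, hpos (T x)]


theorem exists_eigenvector (T : H →L[ℝ] H) (hsymm : ∀ x y : H, ⟪T x, y⟫ = ⟪x, T y⟫)
    (hcpt : IsCompactOperator T) (hpos : ∀ x : H, x ≠ 0 → 0 < ⟪T x, x⟫)
    (W : Submodule ℝ H) (hWc : IsClosed (W : Set H)) (hWinv : ∀ y ∈ W, T y ∈ W)
    (hW : W ≠ ⊥) :
    ∃ x, x ∈ W ∧ ‖x‖ = 1 ∧ T x = rsup T W • x := by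
  have hpos0 : ∀ x : H, 0 ≤ ⟪T x, x⟫ := by
    intro x; rcases eq_or_ne x 0 with rfl | h
    · simp
    · exact (hpos x h).le
  set μ := rsup T W with hμdef
  have hμpos : 0 < μ := rsup_pos T hpos hW
  obtain ⟨u, hu_mono, hu_tend, hu_mem⟩ :=
    exists_seq_tendsto_sSup (rset_nonempty T hW) (rset_bdd T W)
  choose x hx hxu using hu_mem
  have hxW : ∀ n, x n ∈ W := fun n => (hx n).1
  have hx1 : ∀ n, ‖x n‖ = 1 := fun n => (hx n).2
  have key : ∀ n, ‖T (x n) - μ • x n‖ ^ 2 ≤ μ * (μ - u n) := by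
    intro n
    have hTle := norm_T_sq_le T hsymm hpos0 (hxW n) hWinv
    have hexp : ‖T (x n) - μ • x n‖ ^ 2
        = ‖T (x n)‖ ^ 2 - 2 * (μ * ⟪T (x n), x n⟫) + μ ^ 2 := by
      rw [norm_sub_sq_real, inner_smul_right, norm_smul]
      simp [hx1 n]
    have hxun : ⟪T (x n), x n⟫ = u n := hxu n
    have hule : u n ≤ μ := le_csSup (rset_bdd T W) ⟨x n, hx n, hxun⟩
    rw [hexp, hxun]
    rw [hxun] at hTle
    nlinarith [hTle, hμpos]
  have hsq0 : Tendsto (fun n => ‖T (x n) - μ • x n‖ ^ 2) atTop (𝓝 0) := by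
    have hu_tend' : Tendsto u atTop (𝓝 μ) := hu_tend
    have h1 : Tendsto (fun n => μ * (μ - u n)) atTop (𝓝 0) := by
      have h0 : Tendsto (fun n => μ * (μ - u n)) atTop (𝓝 (μ * (μ - μ))) :=
        ((tendsto_const_nhds (α := ℕ) (x := μ)).sub hu_tend').const_mul μ
      simpa using h0
    exact squeeze_zero (fun n => by positivity) key h1
  have hdiff0 : Tendsto (fun n => T (x n) - μ • x n) atTop (𝓝 0) := by
    rw [tendsto_zero_iff_norm_tendsto_zero]
    have := hsq0.sqrt
    simpa [Real.sqrt_sq (norm_nonneg _)] using this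
  obtain ⟨K, hK, hKsub⟩ :=
    IsCompactOperator.image_closedBall_subset_compact (𝕜₁ := ℝ) (f := (T : H →ₗ[ℝ] H)) hcpt 1
  have hmemK : ∀ n, T (x n) ∈ K := by
    intro n
    exact hKsub ⟨x n, by simp [Metric.mem_closedBall, hx1 n], rfl⟩
  obtain ⟨z, hzK, φ, hφ, hconv⟩ := hK.tendsto_subseq hmemK
  have h3 : Tendsto (fun k => μ • x (φ k)) atTop (𝓝 z) := by
    have := hconv.sub (hdiff0.comp hφ.tendsto_atTop)
    simpa using this
  have h4 : Tendsto (fun k => x (φ k)) atTop (𝓝 (μ⁻¹ • z)) := by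
    have := h3.const_smul μ⁻¹
    simpa [smul_smul, inv_mul_cancel₀ hμpos.ne'] using this
  refine ⟨μ⁻¹ • z, ?_, ?_, ?_⟩
  · exact hWc.mem_of_tendsto h4 (Filter.Eventually.of_forall fun k => hxW (φ k))
  · have h5 : Tendsto (fun k => ‖x (φ k)‖) atTop (𝓝 ‖μ⁻¹ • z‖) := h4.norm
    have h6 : Tendsto (fun k : ℕ => (1:ℝ)) atTop (𝓝 1) := tendsto_const_nhds
    have : (fun k => ‖x (φ k)‖) = fun k : ℕ => (1:ℝ) := funext fun k => hx1 (φ k)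
    rw [this] at h5
    exact (tendsto_nhds_unique h5 h6)
  · have l1 : Tendsto (fun k => T (x (φ k))) atTop (𝓝 (T (μ⁻¹ • z))) :=
      (T.continuous.tendsto _).comp h4
    have l2 : T (μ⁻¹ • z) = z := tendsto_nhds_unique l1 hconv
    rw [l2, smul_smul, mul_inv_cancel₀ hμpos.ne', one_smul]


lemma rsup_mono (T : H →L[ℝ] H) {W₁ W₂ : Submodule ℝ H} (h12 : W₁ ≤ W₂) (h1 : W₁ ≠ ⊥) :
    rsup T W₁ ≤ rsup T W₂ := by
  refine csSup_le_csSup (rset_bdd T W₂) (rset_nonempty T h1) ?_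
  rintro r ⟨x, ⟨hxW, hx1⟩, rfl⟩
  exact ⟨x, ⟨h12 hxW, hx1⟩, rfl⟩

noncomputable def pick (T : H →L[ℝ] H) (W : Submodule ℝ H) : H :=
  Classical.epsilon (fun x => x ∈ W ∧ ‖x‖ = 1 ∧ T x = rsup T W • x)

noncomputable def chain (T : H →L[ℝ] H) : ℕ → Submodule ℝ H × H
  | 0 => (⊥, pick T (⊥ : Submodule ℝ H)ᗮ)
  | n + 1 =>
    let p := chain T n
    (p.1 ⊔ Submodule.span ℝ {p.2}, pick T (p.1 ⊔ Submodule.span ℝ {p.2})ᗮ)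

theorem spectral (T : H →L[ℝ] H) (hsymm : ∀ x y : H, ⟪T x, y⟫ = ⟪x, T y⟫)
    (hcpt : IsCompactOperator T) (hpos : ∀ x : H, x ≠ 0 → 0 < ⟪T x, x⟫)
    (hinf : ¬ FiniteDimensional ℝ H) :
    ∃ (e : ℕ → H) (μ : ℕ → ℝ), (∀ n, 0 < μ n) ∧ Antitone μ ∧ Tendsto μ atTop (𝓝 0) ∧
      Orthonormal ℝ e ∧ (Submodule.span ℝ (Set.range e)).topologicalClosure = ⊤ ∧
      ∀ n, T (e n) = μ n • e n := by
  have hpos0 : ∀ x : H, 0 ≤ ⟪T x, x⟫ := by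
    intro x; rcases eq_or_ne x 0 with rfl | h
    · simp
    · exact (hpos x h).le
  set S : ℕ → Submodule ℝ H := fun n => (chain T n).1 with hS
  set e : ℕ → H := fun n => (chain T n).2 with he
  set μ : ℕ → ℝ := fun n => rsup T (S n)ᗮ with hμ
  have hS0 : S 0 = ⊥ := rfl
  have hSsucc : ∀ n, S (n + 1) = S n ⊔ Submodule.span ℝ {e n} := fun n => rfl
  have hepick : ∀ n, e n = pick T (S n)ᗮ := by
    intro n; cases n <;> rfl
  -- the key step lemma
  have step : ∀ Ws : Submodule ℝ H, FiniteDimensional ℝ Ws → (∀ x ∈ Ws, T x ∈ Ws) →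
      Wsᗮ ≠ ⊥ ∧ (pick T Wsᗮ ∈ Wsᗮ ∧ ‖pick T Wsᗮ‖ = 1 ∧
        T (pick T Wsᗮ) = rsup T Wsᗮ • pick T Wsᗮ) := by
    intro Ws hfd hinv
    haveI := hfd
    have hbotne : Wsᗮ ≠ ⊥ := by
      intro h
      have htop : Ws = ⊤ := Submodule.orthogonal_eq_bot_iff.mp h
      rw [htop] at hfd
      exact hinf (Submodule.topEquiv.finiteDimensional)
    have hinv' : ∀ x ∈ Wsᗮ, T x ∈ Wsᗮ := by
      intro x hx
      rw [Submodule.mem_orthogonal]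
      intro u hu
      rw [real_inner_comm, hsymm, real_inner_comm]
      exact (Submodule.mem_orthogonal Ws x).mp hx (T u) (hinv u hu)
    obtain ⟨x, hx⟩ := exists_eigenvector T hsymm hcpt hpos Wsᗮ Ws.isClosed_orthogonal hinv' hbotne
    exact ⟨hbotne, Classical.epsilon_spec
      (p := fun y => y ∈ Wsᗮ ∧ ‖y‖ = 1 ∧ T y = rsup T Wsᗮ • y) ⟨x, hx⟩⟩
  -- the inductive invariant
  have good : ∀ n, FiniteDimensional ℝ (S n) ∧ ∀ x ∈ S n, T x ∈ S n := by
    intro n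
    induction n with
    | zero =>
      constructor
      · rw [hS0]; infer_instance
      · intro x hx
        rw [hS0] at hx ⊢
        simp only [Submodule.mem_bot] at hx ⊢
        rw [hx, map_zero]
    | succ n ih =>
      obtain ⟨hfd, hinv⟩ := ih
      obtain ⟨hne, hmem, hnrm, heig⟩ := step (S n) hfd hinv
      rw [← hepick n] at hmem hnrm heig
      haveI := hfd
      constructor
      · rw [hSsucc n]; infer_instance
      · intro x hx
        rw [hSsucc n] at hx ⊢
        rw [Submodule.mem_sup] at hx
        obtain ⟨y, hy, z, hz, rfl⟩ := hx
        rw [Submodule.mem_span_singleton] at hz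
        obtain ⟨c, rfl⟩ := hz
        rw [map_add, map_smul, heig]
        refine Submodule.add_mem _ (Submodule.mem_sup_left (hinv y hy)) ?_
        refine Submodule.mem_sup_right ?_
        rw [Submodule.mem_span_singleton]
        exact ⟨c * rsup T (S n)ᗮ, by rw [mul_smul]⟩
  have espec : ∀ n, e n ∈ (S n)ᗮ ∧ ‖e n‖ = 1 ∧ T (e n) = μ n • e n := by
    intro n
    obtain ⟨_, h⟩ := step (S n) (good n).1 (good n).2
    rw [← hepick n] at h
    exact h
  have hne : ∀ n, (S n)ᗮ ≠ ⊥ := fun n => (step (S n) (good n).1 (good n).2).1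
  have hμpos : ∀ n, 0 < μ n := fun n => rsup_pos T hpos (hne n)
  have hSmono : Monotone S := by
    refine monotone_nat_of_le_succ fun n => ?_
    rw [hSsucc n]; exact le_sup_left
  have he_mem : ∀ n, e n ∈ S (n + 1) := by
    intro n
    rw [hSsucc n]
    exact Submodule.mem_sup_right (Submodule.mem_span_singleton_self _)
  have horth : ∀ m n, m < n → ⟪e m, e n⟫ = 0 := by
    intro m n hmn
    have h1 : e m ∈ S n := hSmono hmn (he_mem m)
    exact ((Submodule.mem_orthogonal (S n) (e n)).mp (espec n).1 (e m) h1)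
  have hON : Orthonormal ℝ e := by
    rw [orthonormal_iff_ite]
    intro i j
    rcases lt_trichotomy i j with h | rfl | h
    · rw [if_neg h.ne]; exact horth i j h
    · rw [if_pos rfl, real_inner_self_eq_norm_sq, (espec i).2.1]; norm_num
    · rw [if_neg h.ne', real_inner_comm]; exact horth j i h
  have hμanti : Antitone μ := by
    intro m n hmn
    exact rsup_mono T (Submodule.orthogonal_le (hSmono hmn)) (hne n)
  -- μ tends to its infimum
  have hbdd : BddBelow (Set.range μ) := ⟨0, by rintro r ⟨n, rfl⟩; exact (hμpos n).le⟩
  set c := ⨅ n, μ n with hc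
  have hμtend : Tendsto μ atTop (𝓝 c) := tendsto_atTop_ciInf hμanti hbdd
  have hc0 : 0 ≤ c := le_ciInf fun n => (hμpos n).le
  have hceq : c = 0 := by
    by_contra hcne
    have hcpos : 0 < c := lt_of_le_of_ne hc0 (Ne.symm hcne)
    obtain ⟨K, hK, hKsub⟩ :=
      IsCompactOperator.image_closedBall_subset_compact (𝕜₁ := ℝ) (f := (T : H →ₗ[ℝ] H)) hcpt 1
    have hmemK : ∀ n, T (e n) ∈ K := fun n =>
      hKsub ⟨e n, by simp [Metric.mem_closedBall, (espec n).2.1], rfl⟩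
    obtain ⟨z, hzK, φ, hφ, hconv⟩ := hK.tendsto_subseq hmemK
    have hcauchy : Tendsto (fun k => T (e (φ (k+1))) - T (e (φ k))) atTop (𝓝 0) := by
      have := (hconv.comp (tendsto_add_atTop_nat 1)).sub hconv
      simpa using this
    have hlow : ∀ k, c ^ 2 ≤ ‖T (e (φ (k+1))) - T (e (φ k))‖ ^ 2 := by
      intro k
      have hlt : φ k < φ (k + 1) := hφ (Nat.lt_succ_self k)
      rw [(espec (φ (k+1))).2.2, (espec (φ k)).2.2, norm_sub_sq_real]
      rw [inner_smul_left, inner_smul_right, real_inner_comm, horth _ _ hlt]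
      rw [norm_smul, norm_smul]
      simp only [(espec (φ (k+1))).2.1, (espec (φ k)).2.1, RCLike.conj_to_real]
      have h1 : c ≤ μ (φ (k+1)) := ciInf_le hbdd _
      have h2 : c ≤ μ (φ k) := ciInf_le hbdd _
      have := (hμpos (φ k)).le
      have := (hμpos (φ (k+1))).le
      simp only [Real.norm_eq_abs, mul_one]
      rw [abs_of_nonneg (hμpos (φ (k+1))).le, abs_of_nonneg (hμpos (φ k)).le]
      nlinarith
    have hnorm0 : Tendsto (fun k => ‖T (e (φ (k+1))) - T (e (φ k))‖ ^ 2) atTop (𝓝 0) := by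
      have := (hcauchy.norm).pow 2
      simpa using this
    have : c ^ 2 ≤ 0 := ge_of_tendsto hnorm0 (Filter.Eventually.of_forall hlow)
    nlinarith
  rw [hceq] at hμtend
  -- density
  have hdense : (Submodule.span ℝ (Set.range e)).topologicalClosure = ⊤ := by
    rw [Submodule.topologicalClosure_eq_top_iff]
    rw [Submodule.eq_bot_iff]
    intro x hx
    by_contra hx0
    have hSleM : ∀ n, S n ≤ Submodule.span ℝ (Set.range e) := by
      intro n
      induction n with
      | zero => rw [hS0]; exact bot_le
      | succ n ih =>
        rw [hSsucc n, sup_le_iff]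
        exact ⟨ih, Submodule.span_le.mpr (by
          rintro y rfl
          exact Submodule.subset_span ⟨n, rfl⟩)⟩
    have hxS : ∀ n, x ∈ (S n)ᗮ := fun n => Submodule.orthogonal_le (hSleM n) hx
    set y := ‖x‖⁻¹ • x with hy
    have hy1 : ‖y‖ = 1 := by
      rw [hy, norm_smul, norm_inv, norm_norm, inv_mul_cancel₀ (norm_ne_zero_iff.2 hx0)]
    have hy0 : y ≠ 0 := by
      rw [hy]
      simp [smul_eq_zero, hx0, inv_eq_zero, norm_eq_zero]
    have hyle : ∀ n, ⟪T y, y⟫ ≤ μ n := fun n =>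
      le_rsup T (Submodule.smul_mem _ _ (hxS n)) hy1
    have : ⟪T y, y⟫ ≤ 0 := ge_of_tendsto hμtend (Filter.Eventually.of_forall hyle)
    exact absurd this (not_le.mpr (hpos y hy0))
  exact ⟨e, μ, hμpos, hμanti, hμtend, hON, hdense, fun n => (espec n).2.2⟩

end WeakEig


open RealInnerProductSpace Filter

/-- For a non-negative, continuous, symmetric bilinear form `b` on a Hilbert
space `V` that is densely and compactly embedded (via `ι`) in an infinite-dimensional real
Hilbert space `H`, with `‖u‖_V² = ‖ι u‖_H² + b (u, u)`, the weak eigenvalue problem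
`b (u, v) = λ ⟪ι u, ι v⟫` has a sequence of eigenvectors whose images form an orthonormal
basis of `H`, with nondecreasing nonnegative eigenvalues tending to infinity. -/
theorem weak_eigenvalue_problem_exists_orthonormal_basis
    (H V : Type*)
    [NormedAddCommGroup H] [InnerProductSpace ℝ H] [CompleteSpace H]
    [NormedAddCommGroup V] [InnerProductSpace ℝ V] [CompleteSpace V]
    (hH : ¬ FiniteDimensional ℝ H)
    (ι : V →L[ℝ] H)
    (hι_inj : Function.Injective ι)
    (hι_cpt : IsCompactOperator ι)
    (hι_dense : DenseRange ι)
    (b : V →L[ℝ] V →L[ℝ] ℝ)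
    (hb_symm : ∀ u v : V, b u v = b v u)
    (hb_nonneg : ∀ u : V, 0 ≤ b u u)
    (hnorm : ∀ u : V, ‖u‖ ^ 2 = ‖ι u‖ ^ 2 + b u u) :
    ∃ (u : ℕ → V) (lam : ℕ → ℝ),
      Monotone lam ∧
      (∀ n, 0 ≤ lam n) ∧
      Tendsto lam atTop atTop ∧
      Orthonormal ℝ (fun n => ι (u n)) ∧
      (Submodule.span ℝ (Set.range fun n => ι (u n))).topologicalClosure = ⊤ ∧
      (∀ (n : ℕ) (v : V), b (u n) v = lam n * ⟪ι (u n), ι v⟫) := by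
  classical
  set A := ContinuousLinearMap.adjoint ι with hA
  set T : H →L[ℝ] H := ι ∘L A with hT
  have hTapp : ∀ x : H, T x = ι (A x) := fun x => rfl
  have hadj : ∀ (y : H) (v : V), (inner ℝ (A y) v : ℝ) = (inner ℝ y (ι v) : ℝ) := fun y v =>
    ContinuousLinearMap.adjoint_inner_left ι v y
  have hTinner : ∀ x y : H, ⟪T x, y⟫ = (inner ℝ (A x) (A y) : ℝ) := by
    intro x y
    rw [hTapp, real_inner_comm, ← hadj y (A x), real_inner_comm]
  have hsymm : ∀ x y : H, ⟪T x, y⟫ = ⟪x, T y⟫ := by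
    intro x y
    have h1 := hTinner x y
    have h2 := hTinner y x
    rw [real_inner_comm x (T y)] at h2
    rw [h1, h2, real_inner_comm]
  have hAinj : ∀ x : H, A x = 0 → x = 0 := by
    intro x hx
    have h1 : ∀ v : V, (inner ℝ x (ι v) : ℝ) = 0 := by
      intro v
      rw [← hadj x v, hx, inner_zero_left]
    have h2 : ∀ y : H, (inner ℝ x y : ℝ) = 0 := by
      have hcl : IsClosed {y : H | (inner ℝ x y : ℝ) = 0} :=
        isClosed_eq (Continuous.inner continuous_const continuous_id) continuous_const
      have hsub : Set.range ι ⊆ {y : H | (inner ℝ x y : ℝ) = 0} := by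
        rintro - ⟨v, rfl⟩
        exact h1 v
      intro y
      have h3 : closure (Set.range ι) ⊆ {y : H | (inner ℝ x y : ℝ) = 0} :=
        closure_minimal hsub hcl
      rw [hι_dense.closure_range] at h3
      exact h3 (Set.mem_univ y)
    exact inner_self_eq_zero.mp (h2 x)
  have hpos : ∀ x : H, x ≠ 0 → 0 < ⟪T x, x⟫ := by
    intro x hx
    rw [hTinner, real_inner_self_eq_norm_sq]
    have hne : A x ≠ 0 := fun h => hx (hAinj x h)
    exact pow_pos (norm_pos_iff.mpr hne) 2
  have hcptT : IsCompactOperator T := hι_cpt.comp_clm A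
  obtain ⟨e, μ, hμpos, hμanti, hμtend, hON, hdense, heig⟩ :=
    WeakEig.spectral T hsymm hcptT hpos hH
  refine ⟨fun n => (μ n)⁻¹ • A (e n), fun n => (μ n)⁻¹ - 1, ?_, ?_, ?_, ?_, ?_, ?_⟩
  all_goals {
    have hιu : ∀ n, ι ((μ n)⁻¹ • A (e n)) = e n := by
      intro n
      rw [map_smul, ← hTapp, heig n, smul_smul, inv_mul_cancel₀ (hμpos n).ne', one_smul]
    have hpol : ∀ p q : V, (inner ℝ p q : ℝ) = (inner ℝ (ι p) (ι q) : ℝ) + b p q := by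
      intro p q
      have h1 := hnorm (p + q)
      have h2 := hnorm p
      have h3 := hnorm q
      rw [norm_add_sq_real, map_add, norm_add_sq_real] at h1
      have hb : b (p + q) (p + q) = b p p + 2 * b p q + b q q := by
        have e1 : b (p + q) (p + q) = b p p + b p q + (b q p + b q q) := by
          simp only [map_add, ContinuousLinearMap.add_apply]
          ring
        rw [e1, hb_symm q p]
        ring
      rw [hb] at h1
      linarith
    have hinner_u : ∀ n (v : V), (inner ℝ ((μ n)⁻¹ • A (e n)) v : ℝ)
        = (μ n)⁻¹ * (inner ℝ (ι ((μ n)⁻¹ • A (e n))) (ι v) : ℝ) := by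
      intro n v
      rw [real_inner_smul_left, hadj (e n) v, hιu n]
    have hbeq : ∀ n (v : V), b ((μ n)⁻¹ • A (e n)) v
        = ((μ n)⁻¹ - 1) * (inner ℝ (ι ((μ n)⁻¹ • A (e n))) (ι v) : ℝ) := by
      intro n v
      have := hpol ((μ n)⁻¹ • A (e n)) v
      rw [hinner_u n v] at this
      linarith
    have hunit : ∀ n, (inner ℝ (ι ((μ n)⁻¹ • A (e n))) (ι ((μ n)⁻¹ • A (e n))) : ℝ) = 1 := by
      intro n
      rw [hιu n, real_inner_self_eq_norm_sq, hON.1 n]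
      norm_num
    first
    | -- Monotone lam
      (intro m n hmn
       have := inv_anti₀ (hμpos n) (hμanti hmn)
       dsimp only
       linarith)
    | -- nonneg
      (intro n
       have h := hbeq n ((μ n)⁻¹ • A (e n))
       rw [hunit n, mul_one] at h
       have := hb_nonneg ((μ n)⁻¹ • A (e n))
       dsimp only
       linarith)
    | -- tendsto
      (have h1 : Tendsto μ atTop (𝓝[>] (0:ℝ)) := by
         rw [tendsto_nhdsWithin_iff]
         exact ⟨hμtend, Filter.Eventually.of_forall fun n => hμpos n⟩
       have h2 : Tendsto (fun n => (μ n)⁻¹) atTop atTop := h1.inv_tendsto_nhdsGT_zero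
       exact tendsto_atTop_add_const_right _ (-1) h2)
    | -- orthonormal
      (have hfe : (fun n => ι ((μ n)⁻¹ • A (e n))) = e := funext hιu
       rw [hfe]
       exact hON)
    | -- dense
      (have hfe : (fun n => ι ((μ n)⁻¹ • A (e n))) = e := funext hιu
       rw [hfe]
       exact hdense)
    | -- eigen equation
      (intro n v
       exact hbeq n v)
  }
end

section
/- Let H be an infinite-dimensional real Hilbert space, V a real Hilbert space, ι : V → H an injective compact continuous linear map with dense range, and b : V × V → ℝ a continuous symmetric bilinear form satisfying b(u,u) ≥ 0 and ‖u‖_V² = ‖ι u‖_H² + b(u,u) for all u ∈ V. Suppose (u_n)_{n≥1} is a sequence in V and (λ_n)_{n≥1} is a nondecreasing sequence of nonnegative reals such that (ι u_n)_{n≥1} is an orthonormal basis of H and b(u_n, v) = λ_n ⟨ι u_n, ι v⟩_H for all n ≥ 1 and all v ∈ V. Then for every k ≥ 1, λ_k equals the minimum, over all k-dimensional linear subspaces U of V, of the supremum over nonzero u ∈ U of the Rayleigh quotient b(u,u)/‖ι u‖_H², and this minimum is attained. -/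
open RealInnerProductSpace Filter

/-- (Min-max principle.) In the setting of the weak eigenvalue problem for a
non-negative continuous symmetric bilinear form `b` on `V`, compactly and densely embedded into
an infinite-dimensional real Hilbert space `H`, given a sequence of weak eigenpairs
`(u_n, λ_n)` (indexed here by `n : ℕ`, so `u n` is the `(n+1)`-st eigenvector) whose images
form an orthonormal basis of `H` with nondecreasing nonnegative eigenvalues, the eigenvalue
`lam k` (the `(k+1)`-st eigenvalue) is the minimum, over all `(k+1)`-dimensional subspaces
`U` of `V`, of the supremum of the Rayleigh quotient `b (u, u) / ‖ι u‖²` over nonzero `u ∈ U`;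
in particular this minimum is attained. -/
theorem weak_eigenvalue_min_max
    (H V : Type*)
    [NormedAddCommGroup H] [InnerProductSpace ℝ H] [CompleteSpace H]
    [NormedAddCommGroup V] [InnerProductSpace ℝ V] [CompleteSpace V]
    (hH : ¬ FiniteDimensional ℝ H)
    (ι : V →L[ℝ] H)
    (hι_inj : Function.Injective ι)
    (hι_cpt : IsCompactOperator ι)
    (hι_dense : DenseRange ι)
    (b : V →L[ℝ] V →L[ℝ] ℝ)
    (hb_symm : ∀ u v : V, b u v = b v u)
    (hb_nonneg : ∀ u : V, 0 ≤ b u u)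
    (hnorm : ∀ u : V, ‖u‖ ^ 2 = ‖ι u‖ ^ 2 + b u u)
    (u : ℕ → V) (lam : ℕ → ℝ)
    (hlam_mono : Monotone lam)
    (hlam_nonneg : ∀ n, 0 ≤ lam n)
    (honb : Orthonormal ℝ (fun n => ι (u n)))
    (hdense : (Submodule.span ℝ (Set.range fun n => ι (u n))).topologicalClosure = ⊤)
    (heig : ∀ (n : ℕ) (v : V), b (u n) v = lam n * ⟪ι (u n), ι v⟫) :
    ∀ k : ℕ,
      IsLeast
        { c : ℝ | ∃ U : Submodule ℝ V, Module.finrank ℝ U = k + 1 ∧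
            c = sSup ((fun w : V => b w w / ‖ι w‖ ^ 2) '' { w : V | w ∈ U ∧ w ≠ 0 }) }
        (lam k) := by
  intro k
  -- basic facts
  have hι0 : ∀ {w : V}, w ≠ 0 → ι w ≠ 0 := by
    intro w hw h
    exact hw (hι_inj (by simpa using h))
  have hnormpos : ∀ {w : V}, w ≠ 0 → (0:ℝ) < ‖ι w‖ ^ 2 := by
    intro w hw
    exact pow_pos (norm_pos_iff.mpr (hι0 hw)) 2
  -- the V inner product decomposes
  have hinner : ∀ v w : V, ⟪v, w⟫ = ⟪ι v, ι w⟫ + b v w := by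
    have h0 : ∀ w : V, ⟪w, w⟫ = ⟪ι w, ι w⟫ + b w w := by
      intro w
      rw [real_inner_self_eq_norm_sq, real_inner_self_eq_norm_sq]
      exact hnorm w
    intro v w
    have h1 := h0 (v + w)
    have h2 := h0 v
    have h3 := h0 w
    simp only [inner_add_add_self, map_add, ContinuousLinearMap.add_apply] at h1
    have hs := hb_symm v w
    have hi : ⟪w, v⟫ = ⟪v, w⟫ := real_inner_comm _ _
    have hi2 : ⟪ι w, ι v⟫ = ⟪ι v, ι w⟫ := real_inner_comm _ _
    linarith
  have h_uv : ∀ (n : ℕ) (v : V), ⟪u n, v⟫ = (1 + lam n) * ⟪ι (u n), ι v⟫ := by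
    intro n v
    rw [hinner, heig]; ring
  -- Hilbert basis of H
  have hdense' : ⊤ ≤ (Submodule.span ℝ (Set.range fun n => ι (u n))).topologicalClosure :=
    le_of_eq hdense.symm
  let f : HilbertBasis ℕ ℝ H := HilbertBasis.mk honb hdense'
  have hf : ⇑f = fun n => ι (u n) := HilbertBasis.coe_mk honb hdense'
  -- Parseval in H
  have hA : ∀ v : V, HasSum (fun n => ⟪ι (u n), ι v⟫ ^ 2) (‖ι v‖ ^ 2) := by
    intro v
    have h := f.hasSum_inner_mul_inner (ι v) (ι v)
    rw [real_inner_self_eq_norm_sq, hf] at h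
    refine h.congr_fun ?_
    intro n
    rw [real_inner_comm (ι (u n)) (ι v), sq]
  -- the rescaled eigenvectors form an orthonormal family in V
  set c : ℕ → ℝ := fun n => Real.sqrt (1 + lam n) with hc
  have hcpos : ∀ n, 0 < c n := fun n => Real.sqrt_pos.mpr (by linarith [hlam_nonneg n])
  have hcsq : ∀ n, c n ^ 2 = 1 + lam n := fun n =>
    Real.sq_sqrt (by linarith [hlam_nonneg n])
  set e : ℕ → V := fun n => (c n)⁻¹ • u n with he
  have h_ev : ∀ (n : ℕ) (v : V), ⟪e n, v⟫ = (c n)⁻¹ * ((1 + lam n) * ⟪ι (u n), ι v⟫) := by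
    intro n v
    rw [he]
    simp [real_inner_smul_left, h_uv]
  have hone : Orthonormal ℝ e := by
    rw [orthonormal_iff_ite]
    intro i j
    have hij := orthonormal_iff_ite.mp honb i j
    have h1 : ⟪e i, e j⟫ = (c i)⁻¹ * ((1 + lam i) * ((c j)⁻¹ * ⟪ι (u i), ι (u j)⟫)) := by
      rw [h_ev, he]
      simp only [map_smul, inner_smul_right]
    rw [h1, hij]
    by_cases h : i = j
    · subst h
      simp only [if_pos rfl, mul_one]
      have h3 := (hcpos i).ne'
      rw [← hcsq i]
      field_simp
    · simp [h]
  -- span of the `e n` is dense in V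
  have hVdense : ⊤ ≤ (Submodule.span ℝ (Set.range e)).topologicalClosure := by
    rw [top_le_iff, Submodule.topologicalClosure_eq_top_iff, Submodule.eq_bot_iff]
    intro v hv
    have hv' : ∀ n, ⟪ι (u n), ι v⟫ = 0 := by
      intro n
      have h1 : ⟪e n, v⟫ = 0 :=
        (Submodule.mem_orthogonal _ _).mp hv (e n) (Submodule.subset_span ⟨n, rfl⟩)
      rw [h_ev] at h1
      have h2 := (hcpos n).ne'
      have h3 : (0:ℝ) < 1 + lam n := by linarith [hlam_nonneg n]
      rcases mul_eq_zero.mp h1 with h | h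
      · exact absurd h (inv_ne_zero h2)
      · rcases mul_eq_zero.mp h with h' | h'
        · exact absurd h' h3.ne'
        · exact h'
    have hvH : ι v ∈ (Submodule.span ℝ (Set.range fun n => ι (u n)))ᗮ := by
      rw [Submodule.mem_orthogonal]
      intro x hx
      have hker : Submodule.span ℝ (Set.range fun n => ι (u n)) ≤
          LinearMap.ker (innerSL ℝ (ι v)).toLinearMap := by
        rw [Submodule.span_le]
        rintro _ ⟨n, rfl⟩
        simpa [real_inner_comm] using hv' n
      have := hker hx
      simpa [real_inner_comm] using this
    rw [Submodule.topologicalClosure_eq_top_iff.mp hdense] at hvH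
    have : ι v = 0 := hvH
    have : v = 0 := hι_inj (by simpa using this)
    simp [this]
  let g : HilbertBasis ℕ ℝ V := HilbertBasis.mk hone hVdense
  have hg : ⇑g = e := HilbertBasis.coe_mk hone hVdense
  -- Parseval in V
  have hB : ∀ v : V, HasSum (fun n => (1 + lam n) * ⟪ι (u n), ι v⟫ ^ 2) (‖v‖ ^ 2) := by
    intro v
    have h := g.hasSum_inner_mul_inner v v
    rw [real_inner_self_eq_norm_sq, hg] at h
    refine h.congr_fun ?_
    intro n
    have hx : (⟪v, e n⟫:ℝ) = (c n)⁻¹ * ((1 + lam n) * ⟪ι (u n), ι v⟫) := by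
      rw [real_inner_comm, h_ev]
    have hy : (⟪e n, v⟫:ℝ) = (c n)⁻¹ * ((1 + lam n) * ⟪ι (u n), ι v⟫) := h_ev n v
    have h2 := (hcpos n).ne'
    rw [hx, hy, ← hcsq n]
    field_simp
  -- the bilinear form as a sum
  have hC : ∀ v : V, HasSum (fun n => lam n * ⟪ι (u n), ι v⟫ ^ 2) (b v v) := by
    intro v
    have h := (hB v).sub (hA v)
    have hval : ‖v‖ ^ 2 - ‖ι v‖ ^ 2 = b v v := by linarith [hnorm v]
    rw [hval] at h
    refine h.congr_fun ?_
    intro n; ring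
  constructor
  · -- membership: the span of the first k+1 eigenvectors achieves lam k
    set U₀ : Submodule ℝ V := Submodule.span ℝ (Set.range fun i : Fin (k+1) => u i) with hU₀
    have hmemk : u k ∈ U₀ := Submodule.subset_span ⟨(⟨k, by omega⟩ : Fin (k+1)), rfl⟩
    have hιuk : ‖ι (u k)‖ = 1 := honb.1 k
    have huk0 : u k ≠ 0 := by
      intro h
      rw [h, map_zero, norm_zero] at hιuk
      norm_num at hιuk
    refine ⟨U₀, ?_, ?_⟩
    · have h1 : LinearIndependent ℝ (fun n : ℕ => ι (u n)) := honb.linearIndependent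
      have h2 : LinearIndependent ℝ (fun i : Fin (k+1) => ι (u i)) :=
        h1.comp _ Fin.val_injective
      have h3 : LinearIndependent ℝ (fun i : Fin (k+1) => u i) :=
        LinearIndependent.of_comp ι.toLinearMap h2
      rw [hU₀, finrank_span_eq_card h3, Fintype.card_fin]
    · symm
      apply IsGreatest.csSup_eq
      constructor
      · refine ⟨u k, ⟨hmemk, huk0⟩, ?_⟩
        show b (u k) (u k) / ‖ι (u k)‖ ^ 2 = lam k
        have hb1 : b (u k) (u k) = lam k := by
          rw [heig, real_inner_self_eq_norm_sq, hιuk]; ring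
        rw [hb1, hιuk]; norm_num
      · rintro x ⟨w, ⟨hwU, hw0⟩, rfl⟩
        have hzero : ∀ n, k < n → ⟪ι (u n), ι w⟫ = 0 := by
          intro n hn
          have hker : U₀ ≤ LinearMap.ker ((innerSL ℝ (ι (u n))).toLinearMap.comp ι.toLinearMap) := by
            rw [hU₀, Submodule.span_le]
            rintro _ ⟨i, rfl⟩
            have : (n : ℕ) ≠ (i : ℕ) := by omega
            simpa using honb.2 this
          simpa using hker hwU
        have hle : b w w ≤ lam k * ‖ι w‖ ^ 2 := by
          refine hasSum_le ?_ (hC w) ((hA w).mul_left (lam k))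
          intro n
          rcases le_or_gt n k with h | h
          · exact mul_le_mul_of_nonneg_right (hlam_mono h) (sq_nonneg _)
          · rw [hzero n h]; simp
        rw [div_le_iff₀ (hnormpos hw0)]
        linarith
  · -- lower bound
    rintro x ⟨U, hU, rfl⟩
    haveI : FiniteDimensional ℝ U :=
      FiniteDimensional.of_finrank_pos (by rw [hU]; omega)
    -- boundedness of the Rayleigh quotient on U
    obtain ⟨K, hK0, hKanti⟩ :=
      LinearMap.exists_antilipschitzWith (ι.toLinearMap.comp U.subtype) (by
        rw [LinearMap.ker_eq_bot]
        intro a b' hab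
        exact Subtype.ext (hι_inj hab))
    have hbdd : BddAbove ((fun w : V => b w w / ‖ι w‖ ^ 2) '' { w : V | w ∈ U ∧ w ≠ 0 }) := by
      refine ⟨(K : ℝ) ^ 2, ?_⟩
      rintro _ ⟨w, ⟨hwU, hw0⟩, rfl⟩
      have h1 : ‖w‖ ≤ (K : ℝ) * ‖ι w‖ := by
        have := hKanti.le_mul_dist (⟨w, hwU⟩ : U) 0
        simpa [dist_eq_norm] using this
      have h2 : ‖w‖ ^ 2 ≤ (K : ℝ) ^ 2 * ‖ι w‖ ^ 2 := by
        have hn : (0:ℝ) ≤ ‖w‖ := norm_nonneg _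
        nlinarith [norm_nonneg (ι w), K.coe_nonneg]
      rw [div_le_iff₀ (hnormpos hw0)]
      have := hnorm w
      nlinarith [hnormpos hw0]
    -- find a vector in U orthogonal to the first k eigenvectors
    let φ : U →ₗ[ℝ] (Fin k → ℝ) :=
      LinearMap.pi (fun i =>
        ((innerSL ℝ (ι (u i))).toLinearMap.comp ι.toLinearMap).comp U.subtype)
    have hφrange : Module.finrank ℝ (LinearMap.range φ) ≤ k :=
      (Submodule.finrank_le _).trans (by simp)
    have hφker : 0 < Module.finrank ℝ (LinearMap.ker φ) := by
      have := LinearMap.finrank_range_add_finrank_ker φ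
      rw [hU] at this
      omega
    have hne : LinearMap.ker φ ≠ ⊥ := by
      intro h
      rw [h, finrank_bot] at hφker
      omega
    obtain ⟨v', hv'mem, hv'0⟩ := Submodule.exists_mem_ne_zero_of_ne_bot hne
    set v : V := (v' : V) with hv
    have hvU : v ∈ U := v'.2
    have hv0 : v ≠ 0 := by
      intro h
      exact hv'0 (Subtype.ext h)
    have hvzero : ∀ n, n < k → ⟪ι (u n), ι v⟫ = 0 := by
      intro n hn
      have := congrFun (LinearMap.mem_ker.mp hv'mem) ⟨n, hn⟩
      simpa [φ] using this
    have hge : lam k * ‖ι v‖ ^ 2 ≤ b v v := by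
      refine hasSum_le ?_ ((hA v).mul_left (lam k)) (hC v)
      intro n
      rcases lt_or_ge n k with h | h
      · rw [hvzero n h]; simp
      · exact mul_le_mul_of_nonneg_right (hlam_mono h) (sq_nonneg _)
    have hvval : lam k ≤ b v v / ‖ι v‖ ^ 2 := by
      rw [le_div_iff₀ (hnormpos hv0)]
      linarith
    exact hvval.trans (le_csSup hbdd ⟨v, ⟨hvU, hv0⟩, rfl⟩)
end

section
/- Let H be a real Hilbert space, V a real Hilbert space, ι : V → H an injective continuous linear map with dense range, and b : V × V → ℝ a continuous symmetric bilinear form satisfying b(u,u) ≥ 0 and ‖u‖_V² = ‖ι u‖_H² + b(u,u) for all u ∈ V. Then there exists a unique self-adjoint (in general unbounded) operator B in H, i.e., a densely defined linear operator equal to its own adjoint, whose domain is contained in ι(V) and which satisfies ⟨B(ι u), ι v⟩_H = b(u, v) for every u ∈ V with ι u ∈ dom B and every v ∈ V. Moreover, for λ ∈ ℝ and u ∈ V one has: ι u ∈ dom B and B(ι u) = λ · ι u if and only if b(u, v) = λ ⟨ι u, ι v⟩_H for all v ∈ V. -/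
open RealInnerProductSpace

/-- (Representation by a unique self-adjoint operator.) For a non-negative
continuous symmetric bilinear form `b` on a real Hilbert space `V`, densely embedded via an
injective `ι` into a real Hilbert space `H` with `‖u‖_V² = ‖ι u‖_H² + b (u, u)`, there is a
unique self-adjoint (unbounded) operator `B` in `H` with domain contained in `ι (V)` such that
`⟪B (ι u), ι v⟫ = b (u, v)` for all `u, v`; moreover `ι u` is an eigenvector of `B` for the
eigenvalue `λ` iff `(u, λ)` solves the weak eigenvalue problem for `b`. -/
theorem exists_unique_selfAdjoint_operator_of_form
    (H V : Type*)
    [NormedAddCommGroup H] [InnerProductSpace ℝ H] [CompleteSpace H]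
    [NormedAddCommGroup V] [InnerProductSpace ℝ V] [CompleteSpace V]
    (ι : V →L[ℝ] H)
    (hι_inj : Function.Injective ι)
    (hι_dense : DenseRange ι)
    (b : V →L[ℝ] V →L[ℝ] ℝ)
    (hb_symm : ∀ u v : V, b u v = b v u)
    (hb_nonneg : ∀ u : V, 0 ≤ b u u)
    (hnorm : ∀ u : V, ‖u‖ ^ 2 = ‖ι u‖ ^ 2 + b u u) :
    ∃ B : H →ₗ.[ℝ] H,
      (Dense (B.domain : Set H) ∧ B.adjoint = B ∧
        (B.domain : Set H) ⊆ Set.range ι ∧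
        (∀ (u : V) (hu : ι u ∈ B.domain) (v : V), ⟪B ⟨ι u, hu⟩, ι v⟫ = b u v) ∧
        (∀ (lam : ℝ) (u : V),
          (∃ hu : ι u ∈ B.domain, B ⟨ι u, hu⟩ = lam • ι u) ↔
            (∀ v : V, b u v = lam * ⟪ι u, ι v⟫))) ∧
      (∀ B' : H →ₗ.[ℝ] H,
        Dense (B'.domain : Set H) → B'.adjoint = B' →
        (B'.domain : Set H) ⊆ Set.range ι →
        (∀ (u : V) (hu : ι u ∈ B'.domain) (v : V), ⟪B' ⟨ι u, hu⟩, ι v⟫ = b u v) →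
        B' = B) := by
  classical
  -- `T` is the Hilbert-space adjoint of `ι`, `S = ι ∘ T`.
  set T : H →L[ℝ] V := ContinuousLinearMap.adjoint ι with hTdef
  set S : H →L[ℝ] H := ι.comp T with hSdef
  have hSapp : ∀ f : H, S f = ι (T f) := fun _ => rfl
  have hTinner : ∀ (f : H) (v : V), ⟪T f, v⟫ = ⟪f, ι v⟫ := fun f v =>
    ContinuousLinearMap.adjoint_inner_left ι v f
  -- polarization: the `V` inner product decomposes
  have pol : ∀ u v : V, ⟪u, v⟫ = ⟪ι u, ι v⟫ + b u v := by
    intro u v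
    have h1 := hnorm (u + v)
    have h2 := hnorm u
    have h3 := hnorm v
    have e1 : ‖u + v‖ ^ 2 = ‖u‖ ^ 2 + 2 * ⟪u, v⟫ + ‖v‖ ^ 2 := by
      rw [← real_inner_self_eq_norm_sq, ← real_inner_self_eq_norm_sq,
        ← real_inner_self_eq_norm_sq]
      exact real_inner_add_add_self u v
    have e2 : ‖ι (u + v)‖ ^ 2 = ‖ι u‖ ^ 2 + 2 * ⟪ι u, ι v⟫ + ‖ι v‖ ^ 2 := by
      rw [map_add, ← real_inner_self_eq_norm_sq, ← real_inner_self_eq_norm_sq,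
        ← real_inner_self_eq_norm_sq]
      exact real_inner_add_add_self _ _
    have e3 : b (u + v) (u + v) = b u u + 2 * b u v + b v v := by
      simp only [map_add, ContinuousLinearMap.add_apply]
      rw [hb_symm v u]; ring
    rw [e1, e2, e3] at h1
    linarith
  -- orthogonality to the dense range of `ι` forces vanishing
  have horth : ∀ f : H, (∀ v : V, ⟪f, ι v⟫ = 0) → f = 0 := by
    intro f hf
    have hcont : Continuous fun x : H => ⟪f, x⟫ :=
      Continuous.inner continuous_const continuous_id
    have hfun : (fun x : H => ⟪f, x⟫) = fun _ => (0 : ℝ) :=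
      Continuous.ext_on hι_dense hcont continuous_const (by rintro x ⟨v, rfl⟩; exact hf v)
    have h0 : ⟪f, f⟫ = 0 := congrFun hfun f
    exact inner_self_eq_zero.mp h0
  have hS0 : ∀ f : H, S f = 0 → f = 0 := by
    intro f hf
    have hTf : T f = 0 := hι_inj (by rw [← hSapp, hf, map_zero])
    refine horth f fun v => ?_
    rw [← hTinner f v, hTf, inner_zero_left]
  have hSinj : Function.Injective S := fun f g h => by
    have := hS0 (f - g) (by rw [map_sub, h, sub_self])
    exact sub_eq_zero.mp this
  have hS_symm : ∀ f g : H, ⟪S f, g⟫ = ⟪f, S g⟫ := by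
    intro f g
    have h1 : ⟪S f, g⟫ = ⟪T g, T f⟫ := by
      rw [hSapp, real_inner_comm]; exact (hTinner g (T f)).symm
    have h2 : ⟪f, S g⟫ = ⟪T f, T g⟫ := by
      rw [hSapp]; exact (hTinner f (T g)).symm
    rw [h1, h2, real_inner_comm]
  -- the inverse of `S` shifted by `-1`
  set Sl : H →ₗ[ℝ] H := (S : H →ₗ[ℝ] H) with hSl
  have hSlinj : Function.Injective Sl := hSinj
  set e : H ≃ₗ[ℝ] LinearMap.range Sl := LinearEquiv.ofInjective Sl hSlinj with he
  have hScoe : ∀ x : LinearMap.range Sl, S (e.symm x) = (x : H) := by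
    intro x
    conv_rhs => rw [← e.apply_symm_apply x]
    rfl
  have esymm_eq : ∀ (z : H) (x : LinearMap.range Sl), S z = (x : H) → e.symm x = z :=
    fun z x h => hSinj (by rw [hScoe, h])
  set B : H →ₗ.[ℝ] H :=
    ⟨LinearMap.range Sl, e.symm.toLinearMap - (LinearMap.range Sl).subtype⟩ with hB
  have hBapp : ∀ x : B.domain, B x = e.symm x - (x : H) := fun _ => rfl
  have hBval : ∀ (x : B.domain) (z : H), S z = (x : H) → B x = z - (x : H) := by
    intro x z hz
    rw [hBapp, esymm_eq z x hz]
  have lem1 : ∀ (z : H) (u : V), (∀ v, ⟪z, ι v⟫ = ⟪u, v⟫) → S z = ι u := by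
    intro z u h
    have hTz : T z = u := ext_inner_right ℝ fun v => by rw [hTinner z v, h v]
    rw [hSapp, hTz]
  -- density of the domain
  have hBdense : Dense (B.domain : Set H) := by
    rw [Submodule.dense_iff_topologicalClosure_eq_top,
      Submodule.topologicalClosure_eq_top_iff, Submodule.eq_bot_iff]
    intro y hy
    have h1 : ∀ f : H, ⟪S f, y⟫ = 0 := fun f =>
      (Submodule.mem_orthogonal _ y).mp hy (S f) ⟨f, rfl⟩
    have h2 : ∀ f : H, ⟪f, S y⟫ = 0 := fun f => by rw [← hS_symm]; exact h1 f
    have h3 : S y = 0 := by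
      have := h2 (S y)
      exact inner_self_eq_zero.mp this
    exact hS0 y h3
  -- domain is contained in the range of ι
  have hBsub : (B.domain : Set H) ⊆ Set.range ι := by
    rintro x ⟨f, rfl⟩
    exact ⟨T f, rfl⟩
  -- representation of the form
  have hBrep : ∀ (u : V) (hu : ι u ∈ B.domain) (v : V), ⟪B ⟨ι u, hu⟩, ι v⟫ = b u v := by
    intro u hu v
    have hSg : S (e.symm ⟨ι u, hu⟩) = ι u := hScoe ⟨ι u, hu⟩
    have hTg : T (e.symm ⟨ι u, hu⟩) = u := hι_inj (by rw [← hSapp, hSg])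
    rw [hBapp, inner_sub_left]
    have hgv : ⟪(e.symm ⟨ι u, hu⟩ : H), ι v⟫ = ⟪u, v⟫ := by
      rw [← hTinner _ v, hTg]
    rw [hgv, pol u v]; ring
  -- symmetry of B
  have hBsymm : B.IsFormalAdjoint B := by
    intro x y
    have hx : S (e.symm x) = (x : H) := hScoe x
    have hy : S (e.symm y) = (y : H) := hScoe y
    have e1 : ⟪B x, (y : H)⟫ = ⟪(e.symm x : H), S (e.symm y)⟫ - ⟪(x : H), (y : H)⟫ := by
      rw [hBapp, inner_sub_left, hy]
    have e2 : ⟪(x : H), B y⟫ = ⟪S (e.symm x), (e.symm y : H)⟫ - ⟪(x : H), (y : H)⟫ := by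
      rw [hBapp, inner_sub_right, hx]
    rw [e1, e2, ← hS_symm]
  -- B applied on range elements
  have hBSf : ∀ (f : H) (hf : S f ∈ B.domain), B ⟨S f, hf⟩ = f - S f := fun f hf =>
    hBval ⟨S f, hf⟩ f rfl
  -- self-adjointness
  have hBsa : B.adjoint = B := by
    have key : ∀ y : B.adjoint.domain, ∃ hy : (y : H) ∈ B.domain,
        B ⟨(y : H), hy⟩ = B.adjoint y := by
      intro y
      have hF := LinearPMap.adjoint_isFormalAdjoint (T := B) hBdense
      set w := B.adjoint y with hw
      have hqf : ∀ f : H, ⟪S (w + y), f⟫ = ⟪(y : H), f⟫ := by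
        intro f
        have hfmem : S f ∈ B.domain := ⟨f, rfl⟩
        have h := hF y ⟨S f, hfmem⟩
        rw [hBSf f hfmem] at h
        -- h : ⟪w, S f⟫ = ⟪↑y, f - S f⟫
        have h' : ⟪S w, f⟫ = ⟪(y : H), f⟫ - ⟪S (y : H), f⟫ := by
          rw [hS_symm, h, inner_sub_right, hS_symm]
        rw [map_add, inner_add_left, h']
        ring
      have hSwy : S (w + (y : H)) = (y : H) := ext_inner_right ℝ hqf
      refine ⟨⟨w + (y : H), hSwy⟩, ?_⟩
      rw [hBval ⟨(y : H), ⟨w + (y : H), hSwy⟩⟩ (w + (y : H)) hSwy]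
      exact add_sub_cancel_right w (y : H)
    apply le_antisymm
    · refine ⟨fun x hx => (key ⟨x, hx⟩).1, fun x y hxy => ?_⟩
      obtain ⟨hx', hval⟩ := key x
      rw [← hval]
      have hxy' : (⟨(x : H), hx'⟩ : B.domain) = y := Subtype.ext hxy
      rw [hxy']
    · exact LinearPMap.IsFormalAdjoint.le_adjoint hBdense hBsymm
  -- eigenvalue characterization
  have hEig : ∀ (lam : ℝ) (u : V),
      (∃ hu : ι u ∈ B.domain, B ⟨ι u, hu⟩ = lam • ι u) ↔
        (∀ v : V, b u v = lam * ⟪ι u, ι v⟫) := by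
    intro lam u
    constructor
    · rintro ⟨hu, heq⟩ v
      rw [← hBrep u hu v, heq, real_inner_smul_left]
    · intro h
      have hz : ∀ v, ⟪(1 + lam) • ι u, ι v⟫ = ⟪u, v⟫ := by
        intro v
        rw [real_inner_smul_left, pol u v, h v]; ring
      have hS1 : S ((1 + lam) • ι u) = ι u := lem1 _ u hz
      refine ⟨⟨(1 + lam) • ι u, hS1⟩, ?_⟩
      rw [hBval ⟨ι u, ⟨(1 + lam) • ι u, hS1⟩⟩ ((1 + lam) • ι u) hS1]
      show (1 + lam) • ι u - ι u = lam • ι u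
      rw [add_smul, one_smul, add_sub_cancel_left]
  refine ⟨B, ⟨hBdense, hBsa, hBsub, hBrep, hEig⟩, ?_⟩
  -- uniqueness
  intro B' hB'dense hB'sa hB'sub hB'rep
  have hle : B' ≤ B := by
    have key' : ∀ x : B'.domain, ∃ hx : (x : H) ∈ B.domain,
        B ⟨(x : H), hx⟩ = B' x := by
      rintro ⟨x, hxd⟩
      obtain ⟨u, rfl⟩ := hB'sub hxd
      have hzv : ∀ v, ⟪B' ⟨ι u, hxd⟩ + ι u, ι v⟫ = ⟪u, v⟫ := fun v => by
        rw [inner_add_left, hB'rep u hxd v, pol u v]; ring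
      have hS1 : S (B' ⟨ι u, hxd⟩ + ι u) = ι u := lem1 _ u hzv
      refine ⟨⟨B' ⟨ι u, hxd⟩ + ι u, hS1⟩, ?_⟩
      rw [hBval ⟨ι u, ⟨B' ⟨ι u, hxd⟩ + ι u, hS1⟩⟩ (B' ⟨ι u, hxd⟩ + ι u) hS1]
      show B' ⟨ι u, hxd⟩ + ι u - ι u = B' ⟨ι u, hxd⟩
      exact add_sub_cancel_right _ _
    exact ⟨fun x hx => (key' ⟨x, hx⟩).1, fun x y hxy => by
      obtain ⟨hx', hval⟩ := key' x
      rw [← hval]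
      have hxy' : (⟨(x : H), hx'⟩ : B.domain) = y := Subtype.ext hxy
      rw [hxy']⟩
  have hge : B ≤ B' := by
    have hfa : B'.IsFormalAdjoint B := by
      intro p q
      obtain ⟨p', hp1, hp2⟩ := LinearPMap.exists_of_le hle p
      rw [hp2, hp1]
      exact hBsymm p' q
    have h := LinearPMap.IsFormalAdjoint.le_adjoint hB'dense hfa
    rwa [hB'sa] at h
  exact le_antisymm hle hge
end

section
/- Let H be an infinite-dimensional real Hilbert space, V a real Hilbert space, ι : V → H an injective compact continuous linear map with dense range, and b : V × V → ℝ a continuous symmetric bilinear form satisfying b(u,u) ≥ 0 and ‖u‖_V² = ‖ι u‖_H² + b(u,u) for all u ∈ V. Then for every λ ∈ ℝ the linear subspace { u ∈ V : b(u, v) = λ ⟨ι u, ι v⟩_H for all v ∈ V } of V is finite-dimensional. -/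
open RealInnerProductSpace

/-- The space of weak solutions `u` of `b (u, v) = λ ⟪ι u, ι v⟫` (for all `v`), as a linear
subspace of `V`. -/
noncomputable def weakEigenspace
    {H V : Type*}
    [NormedAddCommGroup H] [InnerProductSpace ℝ H]
    [NormedAddCommGroup V] [InnerProductSpace ℝ V]
    (ι : V →L[ℝ] H) (b : V →L[ℝ] V →L[ℝ] ℝ) (lam : ℝ) : Submodule ℝ V where
  carrier := { u : V | ∀ v : V, b u v = lam * ⟪ι u, ι v⟫ }
  add_mem' := by
    intro a c ha hc v
    simp only [map_add, ContinuousLinearMap.add_apply, inner_add_left, ha v, hc v]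
    ring
  zero_mem' := by
    intro v
    simp
  smul_mem' := by
    intro t a ha v
    simp only [map_smul, ContinuousLinearMap.coe_smul', Pi.smul_apply, smul_eq_mul,
      real_inner_smul_left, ha v]
    ring

/-- In the setting of a non-negative continuous symmetric bilinear form `b`
on `V`, compactly and densely embedded via an injective `ι` into an infinite-dimensional real
Hilbert space `H`, with `‖u‖_V² = ‖ι u‖_H² + b (u, u)`, every weak eigenspace of `b` is
finite-dimensional. -/
theorem weakEigenspace_finiteDimensional
    (H V : Type*)
    [NormedAddCommGroup H] [InnerProductSpace ℝ H] [CompleteSpace H]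
    [NormedAddCommGroup V] [InnerProductSpace ℝ V] [CompleteSpace V]
    (hH : ¬ FiniteDimensional ℝ H)
    (ι : V →L[ℝ] H)
    (hι_inj : Function.Injective ι)
    (hι_cpt : IsCompactOperator ι)
    (hι_dense : DenseRange ι)
    (b : V →L[ℝ] V →L[ℝ] ℝ)
    (hb_symm : ∀ u v : V, b u v = b v u)
    (hb_nonneg : ∀ u : V, 0 ≤ b u u)
    (hnorm : ∀ u : V, ‖u‖ ^ 2 = ‖ι u‖ ^ 2 + b u u) :
    ∀ lam : ℝ, FiniteDimensional ℝ (weakEigenspace ι b lam) := by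
  intro lam
  set E := weakEigenspace ι b lam with hE
  have hmem : ∀ u : V, u ∈ E ↔ ∀ v : V, b u v = lam * ⟪ι u, ι v⟫ := fun u => Iff.rfl
  -- key norm identity on E
  have hkey : ∀ u : V, u ∈ E → ‖u‖ ^ 2 = (1 + lam) * ‖ι u‖ ^ 2 := by
    intro u hu
    have h2 : b u u = lam * ‖ι u‖ ^ 2 := by
      rw [(hmem u).mp hu u, real_inner_self_eq_norm_sq]
    rw [hnorm u, h2]; ring
  by_cases hlam : 1 + lam ≤ 0
  · -- the eigenspace is trivial
    have hbot : E = ⊥ := by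
      rw [Submodule.eq_bot_iff]
      intro u hu
      have h1 := hkey u hu
      have h2 : ‖u‖ ^ 2 ≤ 0 := by nlinarith [sq_nonneg ‖ι u‖, sq_nonneg ‖u‖]
      have h3 : ‖u‖ = 0 := by nlinarith [norm_nonneg u]
      exact norm_eq_zero.mp h3
    rw [hbot]; infer_instance
  push_neg at hlam
  -- E is closed, hence complete
  have hEclosed : IsClosed (E : Set V) := by
    have : (E : Set V) = ⋂ v : V, {u : V | b u v = lam * ⟪ι u, ι v⟫} := by
      ext u; simp only [Set.mem_iInter, Set.mem_setOf_eq, SetLike.mem_coe, hmem]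
    rw [this]
    exact isClosed_iInter fun v =>
      isClosed_eq (b.flip v).continuous
        (continuous_const.mul (Continuous.inner ι.continuous continuous_const))
  haveI : CompleteSpace E := hEclosed.completeSpace_coe
  -- the closed unit ball of E is sequentially compact
  have hseq : IsSeqCompact (Metric.closedBall (0 : E) 1) := by
    intro u hu
    -- the images ι (u n) lie in a compact set
    obtain ⟨K, hK, hKsub⟩ := hι_cpt.image_subset_compact_of_bounded
      (Metric.isBounded_closedBall (x := (0 : V)) (r := 1))
    have hmemK : ∀ n, ι (u n : V) ∈ K := by
      intro n
      apply hKsub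
      refine ⟨(u n : V), ?_, rfl⟩
      have := hu n
      simpa [Metric.mem_closedBall, dist_eq_norm] using this
    obtain ⟨a, _, φ, hφ, hconv⟩ := hK.tendsto_subseq hmemK
    -- the subsequence is Cauchy in E
    have hcauchy : CauchySeq (u ∘ φ) := by
      have hconv' : CauchySeq (fun n => ι ((u ∘ φ) n : V)) := hconv.cauchySeq
      rw [Metric.cauchySeq_iff] at hconv' ⊢
      intro ε hε
      have hc : (0 : ℝ) < Real.sqrt (1 + lam) := Real.sqrt_pos.mpr hlam
      obtain ⟨N, hN⟩ := hconv' (ε / Real.sqrt (1 + lam)) (by positivity)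
      refine ⟨N, fun m hm n hn => ?_⟩
      have h1 := hN m hm n hn
      have hmemE : ((u ∘ φ) m : V) - ((u ∘ φ) n : V) ∈ E :=
        E.sub_mem ((u (φ m)).2) ((u (φ n)).2)
      have h2 : ‖((u ∘ φ) m : V) - ((u ∘ φ) n : V)‖ ^ 2
          = (1 + lam) * ‖ι (((u ∘ φ) m : V) - ((u ∘ φ) n : V))‖ ^ 2 := hkey _ hmemE
      have h3 : ‖ι (((u ∘ φ) m : V) - ((u ∘ φ) n : V))‖ < ε / Real.sqrt (1 + lam) := by
        rw [map_sub]
        simpa [dist_eq_norm] using h1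
      have h4 : ‖((u ∘ φ) m : V) - ((u ∘ φ) n : V)‖ ^ 2 < ε ^ 2 := by
        have h5 : (1 + lam) * ‖ι (((u ∘ φ) m : V) - ((u ∘ φ) n : V))‖ ^ 2
            < (1 + lam) * (ε / Real.sqrt (1 + lam)) ^ 2 := by
          apply mul_lt_mul_of_pos_left _ hlam
          exact pow_lt_pow_left₀ h3 (norm_nonneg _) (by norm_num)
        have h6 : (1 + lam) * (ε / Real.sqrt (1 + lam)) ^ 2 = ε ^ 2 := by
          rw [div_pow, Real.sq_sqrt hlam.le]
          field_simp
        rw [h2]; rw [h6] at h5; exact h5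
      have h7 : ‖((u ∘ φ) m : V) - ((u ∘ φ) n : V)‖ < ε := by
        nlinarith [norm_nonneg (((u ∘ φ) m : V) - ((u ∘ φ) n : V))]
      calc dist ((u ∘ φ) m) ((u ∘ φ) n)
          = ‖((u ∘ φ) m : V) - ((u ∘ φ) n : V)‖ := by
            rw [dist_eq_norm]
            rfl
        _ < ε := h7
    obtain ⟨x, hx⟩ := cauchySeq_tendsto_of_complete hcauchy
    refine ⟨x, ?_, φ, hφ, hx⟩
    exact Metric.isClosed_closedBall.mem_of_tendsto hx
      (Filter.Eventually.of_forall fun n => hu (φ n))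
  -- Riesz' theorem
  exact FiniteDimensional.of_isCompact_closedBall₀ ℝ one_pos hseq.isCompact
end

section
/- Let φ : ℝ³ → ℝ be smooth with compact support, let α ∈ ℝ³ and μ ∈ ℝ, and suppose that α · ∇φ(x) + μ φ(x) = 0 for all x ∈ ℝ³. Then α · ∇φ(x) = 0 for all x ∈ ℝ³ and μ φ(x) = 0 for all x ∈ ℝ³. -/
open RealInnerProductSpace

/-- If a smooth compactly supported `φ : ℝ³ → ℝ`, a constant vector
`α ∈ ℝ³` and `μ ∈ ℝ` satisfy `α ⬝ ∇φ + μ φ = 0` everywhere, then both terms vanish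
identically. -/
theorem dirDeriv_and_scalar_part_vanish
    (φ : EuclideanSpace ℝ (Fin 3) → ℝ)
    (hφ : ContDiff ℝ (⊤ : ℕ∞) φ) (hφc : HasCompactSupport φ)
    (α : EuclideanSpace ℝ (Fin 3)) (μ : ℝ)
    (h : ∀ x, ⟪α, gradient φ x⟫ + μ * φ x = 0) :
    (∀ x, ⟪α, gradient φ x⟫ = 0) ∧ (∀ x, μ * φ x = 0) := by
  have hdiff : Differentiable ℝ φ := hφ.differentiable (by simp)
  have hfd : ∀ y (v : EuclideanSpace ℝ (Fin 3)), fderiv ℝ φ y v = ⟪gradient φ y, v⟫ := by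
    intro y v
    have := ((hdiff y).hasGradientAt).hasFDerivAt.fderiv
    rw [this]
    simp [InnerProductSpace.toDual_apply_apply]
  rcases eq_or_ne α 0 with hα | hα
  · refine ⟨fun x => by simp [hα], fun x => ?_⟩
    have := h x
    simpa [hα] using this
  rcases eq_or_ne μ 0 with hμ | hμ
  · refine ⟨fun x => by simpa [hμ] using h x, fun x => by simp [hμ]⟩
  -- main case: show φ ≡ 0
  have hφ0 : ∀ x, φ x = 0 := by
    intro x
    set g : ℝ → ℝ := fun t => φ (x + t • α) * Real.exp (μ * t) with hg
    have hderiv : ∀ t, HasDerivAt g 0 t := by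
      intro t
      have hline : HasDerivAt (fun t : ℝ => x + t • α) α t := by
        simpa using ((hasDerivAt_id t).smul_const α).const_add x
      have hk : HasDerivAt (fun t : ℝ => φ (x + t • α))
          (fderiv ℝ φ (x + t • α) α) t :=
        (hdiff (x + t • α)).hasFDerivAt.comp_hasDerivAt t hline
      have he : HasDerivAt (fun t : ℝ => Real.exp (μ * t)) (μ * Real.exp (μ * t)) t := by
        simpa [mul_comm, Function.comp_def] using (Real.hasDerivAt_exp (μ * t)).comp t
          ((hasDerivAt_id t).const_mul μ)
      have := hk.mul he
      have key : fderiv ℝ φ (x + t • α) α * Real.exp (μ * t)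
          + φ (x + t • α) * (μ * Real.exp (μ * t)) = 0 := by
        have h1 := h (x + t • α)
        rw [hfd, real_inner_comm] at *
        nlinarith [h (x + t • α), Real.exp_pos (μ * t)]
      simpa [key, hg, Pi.mul_def] using this
    have hconst : ∀ t, g t = g 0 := by
      intro t
      have : Differentiable ℝ g := fun t => (hderiv t).differentiableAt
      exact is_const_of_deriv_eq_zero this (fun t => (hderiv t).deriv) t 0
    -- pick t large so that x + t • α is outside the support
    obtain ⟨R₀, hR₀⟩ := hφc.isBounded.subset_closedBall 0
    set R : ℝ := |R₀| with hRdef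
    have hR : tsupport φ ⊆ Metric.closedBall 0 R :=
      hR₀.trans (Metric.closedBall_subset_closedBall (le_abs_self R₀))
    have hRnonneg : 0 ≤ R := abs_nonneg R₀
    set t : ℝ := (R + ‖x‖ + 1) / ‖α‖ with ht
    have hαpos : 0 < ‖α‖ := norm_pos_iff.mpr hα
    have hout : φ (x + t • α) = 0 := by
      apply image_eq_zero_of_notMem_tsupport
      intro hmem
      have := hR hmem
      rw [Metric.mem_closedBall, dist_zero_right] at this
      have h1 : ‖t • α‖ ≤ ‖x + t • α‖ + ‖x‖ := by
        have heq : t • α = (x + t • α) - x := by abel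
        rw [show ‖t • α‖ = ‖(x + t • α) - x‖ from congrArg norm heq]
        exact norm_sub_le (x + t • α) x
      have h2 : ‖t • α‖ = t * ‖α‖ := by
        rw [norm_smul, Real.norm_eq_abs, abs_of_pos]
        positivity
      have h3 : t * ‖α‖ = R + ‖x‖ + 1 := by
        rw [ht, div_mul_cancel₀ _ hαpos.ne']
      nlinarith
    have : g t = 0 := by simp [hg, hout]
    have h0 : g 0 = 0 := (hconst t).symm.trans this
    simpa [hg] using h0
  refine ⟨fun x => ?_, fun x => by simp [hφ0 x]⟩
  have := h x
  simp [hφ0 x] at this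
  rw [real_inner_comm (gradient φ x), ← hfd]
  exact this
end
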